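/- Let n be odd, let p be a permutation of {1,...,n}, and let q be obtained from p by inserting n+1 into a T3-gap of p (a position i with p_i > p_{i+1}, both odd). Then B(q) = B(p) - 1, C(q) = C(p) + 1, D(q) = D(p) + 1, A(q) = A(p), and E(q) = E(p). -/

import Mathlib

open List
open scoped Classical

/-- adjacent pairs of a list -/
def pairs (l : List ℕ) : List (ℕ × ℕ) := l.zip l.tail

/-- `l` is a permutation (as a word) of `{1, ..., n}` -/
def IsPermOf (n : ℕ) (l : List ℕ) : Prop := l.Perm (List.range' 1 n)

def T1 (l : List ℕ) : ℕ := (pairs l).countP (fun q => decide (q.2 < q.1 ∧ Odd q.1 ∧ Even q.2))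
def T2 (l : List ℕ) : ℕ := (pairs l).countP (fun q => decide (q.1 < q.2 ∧ Odd q.1 ∧ Odd q.2))
def T3 (l : List ℕ) : ℕ := (pairs l).countP (fun q => decide (q.2 < q.1 ∧ Odd q.1 ∧ Odd q.2))
def S10 (l : List ℕ) : ℕ := (pairs l).countP (fun q => decide (q.2 < q.1 ∧ Odd q.1))
def S12 (l : List ℕ) : ℕ := (pairs l).countP (fun q => decide (Odd q.1 ∧ Odd q.2))

/-- largest `i` such that the values `1, ..., i` appear in left-to-right order in `l` -/
def S17 (l : List ℕ) : ℕ :=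
  Nat.findGreatest (fun i => ∀ j < i, 1 ≤ j → l.idxOf j < l.idxOf (j + 1)) l.length

def statA (l : List ℕ) : ℕ :=
  (pairs l).countP (fun q => decide (Even q.1 ∧ Even q.2)) + (if Even (l.headD 1) then 1 else 0)
def statB (l : List ℕ) : ℕ :=
  (pairs l).countP (fun q => decide (q.2 < q.1 ∧ Odd q.1)) + (if Odd (l.getLastD 0) then 1 else 0)
def statC (l : List ℕ) : ℕ :=
  (pairs l).countP (fun q => decide ((Even q.1 ∧ Odd q.2) ∨ (q.1 < q.2 ∧ Odd q.1 ∧ Odd q.2))) +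
    (if Odd (l.headD 0) then 1 else 0)
def statD (l : List ℕ) : ℕ :=
  (pairs l).countP (fun q => decide (q.1 < q.2 ∧ Odd q.1 ∧ Even q.2))
def statE (l : List ℕ) : ℕ := if Even (l.getLastD 1) then 1 else 0

/-- the `i`-th entry of `l` (0-indexed), default 0 -/
def entry (l : List ℕ) (i : ℕ) : ℕ := l.getD i 0

/-- inserting `m` at gap `j` of `l` -/
def insertGap (l : List ℕ) (j : ℕ) (m : ℕ) : List ℕ := l.take j ++ m :: l.drop j

def IsAGap (l : List ℕ) (j : ℕ) : Prop :=
  (j = 0 ∧ Even (l.headD 1)) ∨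
  (1 ≤ j ∧ j < l.length ∧ Even (entry l (j - 1)) ∧ Even (entry l j))

def IsBGap (l : List ℕ) (j : ℕ) : Prop :=
  (1 ≤ j ∧ j < l.length ∧ entry l j < entry l (j - 1) ∧ Odd (entry l (j - 1))) ∨
  (j = l.length ∧ Odd (l.getLastD 0))

def IsCGap (l : List ℕ) (j : ℕ) : Prop :=
  (j = 0 ∧ Odd (l.headD 0)) ∨
  (1 ≤ j ∧ j < l.length ∧ ((Even (entry l (j - 1)) ∧ Odd (entry l j)) ∨
    (entry l (j - 1) < entry l j ∧ Odd (entry l (j - 1)) ∧ Odd (entry l j))))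

def IsDGap (l : List ℕ) (j : ℕ) : Prop :=
  1 ≤ j ∧ j < l.length ∧ entry l (j - 1) < entry l j ∧ Odd (entry l (j - 1)) ∧ Even (entry l j)

def IsEGap (l : List ℕ) (j : ℕ) : Prop := j = l.length ∧ Even (l.getLastD 1)

/-- the word `p_1 p_2 ... p_n` (values in `{1,...,n}`) of a permutation of `Fin n` -/
def word (n : ℕ) (p : Equiv.Perm (Fin n)) : List ℕ := List.ofFn (fun i => (p i : ℕ) + 1)

/-!
Inserting the even letter `m = n + 1 > a` between the odd descent `a > b` replaces the
adjacent pair `(a, b)` by `(a, m)` and `(m, b)` and keeps the first and last letters, so every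
statistic changes only through these three pairs: `(a, b)` is counted by `B` alone, `(a, m)` by
`D` alone and `(m, b)` by `C` alone.
-/

theorem pairs_cons_cons (a b : ℕ) (l : List ℕ) : pairs (a :: b :: l) = (a, b) :: pairs (b :: l) :=
  rfl

theorem pairs_append_cons (u : List ℕ) (a : ℕ) (v : List ℕ) :
    pairs (u ++ a :: v) = pairs (u ++ [a]) ++ pairs (a :: v) := by
  induction u with
  | nil => rfl
  | cons x u ih =>
    cases u with
    | nil => rfl
    | cons y u => exact congrArg ((x, y) :: ·) ih

theorem countP_pairs_insert (P : ℕ × ℕ → Prop) [DecidablePred P] (u w : List ℕ) (a m b : ℕ) :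
    (pairs (u ++ a :: m :: b :: w)).countP (fun q => decide (P q)) + (if P (a, b) then 1 else 0) =
      (pairs (u ++ a :: b :: w)).countP (fun q => decide (P q)) + (if P (a, m) then 1 else 0) +
        (if P (m, b) then 1 else 0) := by
  simp only [pairs_append_cons u a (_ :: _), pairs_cons_cons, List.countP_append,
    List.countP_cons, decide_eq_true_eq]
  omega

theorem insertGap_append_cons (u v : List ℕ) (a m : ℕ) :
    insertGap (u ++ a :: v) (u.length + 1) m = u ++ a :: m :: v := by
  simp [insertGap, List.take_length_add_append, List.drop_length_add_append]

theorem exists_eq_append_entry_cons_entry_cons {l : List ℕ} {k : ℕ} (hk : k + 1 < l.length) :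
    ∃ u w, u.length = k ∧ l = u ++ entry l k :: entry l (k + 1) :: w := by
  have hk' : k < l.length := Nat.lt_of_succ_lt hk
  refine ⟨l.take k, l.drop (k + 2), List.length_take_of_le hk'.le, ?_⟩
  rw [entry, entry, List.getD_eq_getElem _ _ hk, List.getD_eq_getElem _ _ hk',
    ← List.drop_eq_getElem_cons hk, ← List.drop_eq_getElem_cons hk', List.take_append_drop]

section Insertion

variable {u w : List ℕ} {a b m : ℕ}

theorem headD_insert (d : ℕ) : (u ++ a :: m :: w).headD d = (u ++ a :: w).headD d := by
  cases u <;> rfl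

theorem getLastD_insert (d : ℕ) :
    (u ++ a :: m :: b :: w).getLastD d = (u ++ a :: b :: w).getLastD d := by
  simp only [List.getLastD_eq_getLast?, List.getLast?_append, List.getLast?_cons_cons]

theorem statB_insert (ha : Odd a) (hba : b < a) (hm : Even m) (ham : a < m) :
    statB (u ++ a :: m :: b :: w) + 1 = statB (u ++ a :: b :: w) := by
  have h := countP_pairs_insert (fun q => q.2 < q.1 ∧ Odd q.1) u w a m b
  rw [if_pos ⟨hba, ha⟩, if_neg fun hP => ham.not_gt hP.1,
    if_neg fun hP => Nat.not_odd_iff_even.mpr hm hP.2] at h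
  rw [statB, statB, getLastD_insert]
  omega

theorem statC_insert (ha : Odd a) (hb : Odd b) (hba : b < a) (hm : Even m) :
    statC (u ++ a :: m :: b :: w) = statC (u ++ a :: b :: w) + 1 := by
  have h := countP_pairs_insert
    (fun q => (Even q.1 ∧ Odd q.2) ∨ (q.1 < q.2 ∧ Odd q.1 ∧ Odd q.2)) u w a m b
  have ha' : ¬ Even a := Nat.not_even_iff_odd.mpr ha
  have hm' : ¬ Odd m := Nat.not_odd_iff_even.mpr hm
  rw [if_neg (by simp [ha', hba.not_gt]), if_neg (by simp [ha', hm']),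
    if_pos (Or.inl ⟨hm, hb⟩)] at h
  rw [statC, statC, headD_insert]
  omega

theorem statD_insert (ha : Odd a) (hb : Odd b) (hm : Even m) (ham : a < m) :
    statD (u ++ a :: m :: b :: w) = statD (u ++ a :: b :: w) + 1 := by
  have h := countP_pairs_insert (fun q => q.1 < q.2 ∧ Odd q.1 ∧ Even q.2) u w a m b
  rw [if_neg fun hP => Nat.not_even_iff_odd.mpr hb hP.2.2, if_pos ⟨ham, ha, hm⟩,
    if_neg fun hP => Nat.not_odd_iff_even.mpr hm hP.2.1] at h
  rw [statD, statD]
  omega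

theorem statA_insert (ha : Odd a) (hb : Odd b) :
    statA (u ++ a :: m :: b :: w) = statA (u ++ a :: b :: w) := by
  have h := countP_pairs_insert (fun q => Even q.1 ∧ Even q.2) u w a m b
  have ha' : ¬ Even a := Nat.not_even_iff_odd.mpr ha
  rw [if_neg fun hP => ha' hP.1, if_neg fun hP => ha' hP.1,
    if_neg fun hP => Nat.not_even_iff_odd.mpr hb hP.2] at h
  rw [statA, statA, headD_insert]
  omega

theorem statE_insert : statE (u ++ a :: m :: b :: w) = statE (u ++ a :: b :: w) := by
  rw [statE, statE, getLastD_insert]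

end Insertion

theorem stmt11 (n : ℕ) (hn : Odd n) (l : List ℕ) (hl : IsPermOf n l) (j : ℕ)
    (hj1 : 1 ≤ j) (hj2 : j < n)
    (hgap : entry l j < entry l (j - 1) ∧ Odd (entry l (j - 1)) ∧ Odd (entry l j))
    (q : List ℕ) (hq : q = insertGap l j (n + 1)) :
    statB q = statB l - 1 ∧ statC q = statC l + 1 ∧ statD q = statD l + 1 ∧
    statA q = statA l ∧ statE q = statE l := by
  obtain ⟨k, rfl⟩ : ∃ k, j = k + 1 := ⟨j - 1, by omega⟩
  rw [Nat.add_sub_cancel] at hgap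
  have hlen : l.length = n := by simpa using hl.length_eq
  obtain ⟨u, w, rfl, hsplit⟩ := exists_eq_append_entry_cons_entry_cons (l := l) (k := k) (by omega)
  generalize entry l u.length = a at hgap hsplit
  generalize entry l (u.length + 1) = b at hgap hsplit
  obtain ⟨hba, ha, hb⟩ := hgap
  subst hsplit hq
  have han : a < n + 1 := by
    have := List.mem_range'_1.mp (hl.mem_iff.mp (show a ∈ u ++ a :: b :: w by simp))
    omega
  have hm : Even (n + 1) := hn.add_one
  rw [insertGap_append_cons]
  refine ⟨?_, statC_insert ha hb hba hm, statD_insert ha hb hm han, statA_insert ha hb,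
    statE_insert⟩
  have hB := statB_insert (u := u) (w := w) ha hba hm han
  omega
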